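/- arXiv:1807.07465 — 3 statements merged into one kernel-verified Lean document; each statement's English description precedes it below -/
import Mathlib

section
/- Let Φ be strictly stable, γ ∈ (0,1), W symmetric, and X_i := Σ_{j=0}^{i-1} Φ^j W (Φ^j)^T. For a fixed N ≥ 0, the matrix S := Σ_{i=N}^∞ γ^i X_i converges and satisfies the Lyapunov equation S = γ Φ S Φ^T + (γ^{N+1}/(1-γ)) W + γ^N X_N. -/
open Matrix

/-!
Applying Gelfand's formula to the complexification of `Φ`, strict stability makes the powers
`Φ ^ j` bounded, say by `C` in the Frobenius norm, which is submultiplicative and invariant under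
transposition. Hence `‖X i‖ ≤ i C² ‖W‖` and `∑ γ ^ i • X i` converges absolutely. The Lyapunov
equation follows from `X (i + 1) = Φ X i Φᵀ + W`: dropping the first term `γ ^ N X N` of the
series leaves `γ Φ S Φᵀ` plus a geometric series in `W`.
-/

open Filter
open scoped ENNReal Matrix.Norms.Frobenius

section BanachAlgebra

variable {A : Type*} [NormedRing A] [NormedAlgebra ℂ A] [CompleteSpace A]

theorem spectrum.spectralRadius_lt_one_of_forall_norm_lt_one {a : A}
    (h : ∀ z ∈ spectrum ℂ a, ‖z‖ < 1) : spectralRadius ℂ a < 1 := by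
  rcases (spectrum ℂ a).eq_empty_or_nonempty with hempty | hne
  · simp [spectralRadius, hempty]
  · exact_mod_cast spectrum.spectralRadius_lt_of_forall_lt_of_nonempty hne (r := 1)
      fun z hz => by exact_mod_cast h z hz

theorem spectrum.eventually_norm_pow_lt_one_of_spectralRadius_lt_one {a : A}
    (h : spectralRadius ℂ a < 1) : ∀ᶠ n in atTop, ‖a ^ n‖ < 1 := by
  filter_upwards [(pow_nnnorm_pow_one_div_tendsto_nhds_spectralRadius a).eventually
    (gt_mem_nhds h), eventually_ge_atTop 1] with n hn hn1
  have : (‖a ^ n‖₊ : ℝ≥0∞) < 1 := by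
    rwa [← ENNReal.one_rpow (1 / n : ℝ), ENNReal.rpow_lt_rpow_iff (by positivity)] at hn
  exact_mod_cast this

theorem spectrum.bddAbove_norm_pow_of_spectralRadius_lt_one {a : A}
    (h : spectralRadius ℂ a < 1) : BddAbove (Set.range fun n => ‖a ^ n‖) :=
  (isBoundedUnder_of_eventually_le
    ((eventually_norm_pow_lt_one_of_spectralRadius_lt_one h).mono fun _ => le_of_lt)).bddAbove_range

end BanachAlgebra

theorem Matrix.bddAbove_norm_pow_of_spectrum_lt_one {m : Type*} [Fintype m] [DecidableEq m]
    (Φ : Matrix m m ℝ) (hΦ : ∀ μ ∈ spectrum ℂ (Φ.map (algebraMap ℝ ℂ)), ‖μ‖ < 1) :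
    BddAbove (Set.range fun j => ‖Φ ^ j‖) := by
  convert spectrum.bddAbove_norm_pow_of_spectralRadius_lt_one
    (spectrum.spectralRadius_lt_one_of_forall_norm_lt_one hΦ) using 3 with j
  rw [← Matrix.map_pow Φ (algebraMap ℝ ℂ)]
  exact (frobenius_norm_map_eq _ _ Complex.norm_real).symm

theorem summable_geometric_smul_of_norm_le_mul {E : Type*} [NormedAddCommGroup E]
    [NormedSpace ℝ E] [CompleteSpace E] {γ : ℝ} (hγ : |γ| < 1) {u : ℕ → E} {K : ℝ}
    (hu : ∀ i, ‖u i‖ ≤ i * K) : Summable fun i => γ ^ i • u i := by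
  refine .of_norm_bounded
    ((summable_pow_mul_geometric_of_norm_lt_one 1 (r := |γ|) (by simpa using hγ)).mul_right K)
    fun i => ?_
  rw [norm_smul, norm_pow, Real.norm_eq_abs, pow_one]
  calc |γ| ^ i * ‖u i‖ ≤ |γ| ^ i * (i * K) := by gcongr; exact hu i
    _ = i * |γ| ^ i * K := by ring

section Lyapunov

variable {m : Type*} [Fintype m]

theorem HasSum.eq_lyapunov {Φ W : Matrix m m ℝ} {X : ℕ → Matrix m m ℝ}
    (hX : ∀ i, X (i + 1) = Φ * X i * Φᵀ + W) {γ : ℝ} (hγ : |γ| < 1) (N : ℕ)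
    {S : Matrix m m ℝ} (hS : HasSum (fun i => γ ^ (N + i) • X (N + i)) S) :
    S = γ • (Φ * S * Φᵀ) + (γ ^ (N + 1) / (1 - γ)) • W + γ ^ N • X N := by
  have htail : HasSum (fun i => γ ^ (N + (i + 1)) • X (N + (i + 1))) (S - γ ^ N • X N) := by
    simpa using (hasSum_nat_add_iff' 1).mpr hS
  have hstep : ∀ i, γ ^ (N + (i + 1)) • X (N + (i + 1))
      = γ • (Φ * (γ ^ (N + i) • X (N + i)) * Φᵀ) + (γ ^ (N + 1) * γ ^ i) • W := by
    intro i
    rw [← add_assoc, hX, smul_add, Matrix.mul_smul, Matrix.smul_mul, smul_smul, ← pow_succ',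
      ← pow_add, add_right_comm]
  have hrec : HasSum (fun i => γ ^ (N + (i + 1)) • X (N + (i + 1)))
      (γ • (Φ * S * Φᵀ) + (γ ^ (N + 1) / (1 - γ)) • W) := by
    simp_rw [hstep]
    refine (((hS.mul_left Φ).mul_right Φᵀ).const_smul γ).add ?_
    simpa [div_eq_mul_inv] using
      ((hasSum_geometric_of_abs_lt_one hγ).mul_left (γ ^ (N + 1))).smul_const W
  exact sub_eq_iff_eq_add.mp (htail.unique hrec)

variable [DecidableEq m]

theorem Matrix.sum_range_succ_pow_mul_mul_transpose (Φ W : Matrix m m ℝ) (i : ℕ) :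
    ∑ j ∈ Finset.range (i + 1), Φ ^ j * W * (Φ ^ j)ᵀ
      = Φ * (∑ j ∈ Finset.range i, Φ ^ j * W * (Φ ^ j)ᵀ) * Φᵀ + W := by
  rw [Finset.sum_range_succ', Finset.mul_sum, Finset.sum_mul]
  simp [pow_succ', Matrix.transpose_mul, mul_assoc]

theorem Matrix.norm_sum_pow_mul_mul_transpose_le {Φ W : Matrix m m ℝ} {C : ℝ}
    (hC : ∀ j, ‖Φ ^ j‖ ≤ C) (i : ℕ) :
    ‖∑ j ∈ Finset.range i, Φ ^ j * W * (Φ ^ j)ᵀ‖ ≤ i * (C * ‖W‖ * C) := by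
  have hC0 : 0 ≤ C := (norm_nonneg _).trans (hC 0)
  calc _ ≤ ∑ j ∈ Finset.range i, ‖Φ ^ j * W * (Φ ^ j)ᵀ‖ := norm_sum_le _ _
    _ ≤ ∑ j ∈ Finset.range i, C * ‖W‖ * C := Finset.sum_le_sum fun j _ => ?_
    _ = _ := by simp
  calc ‖Φ ^ j * W * (Φ ^ j)ᵀ‖ ≤ ‖Φ ^ j‖ * ‖W‖ * ‖(Φ ^ j)ᵀ‖ := norm_mul₃_le
    _ ≤ C * ‖W‖ * C := by
      rw [frobenius_norm_transpose]
      gcongr <;> exact hC j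

end Lyapunov

theorem stmt2_general {n : ℕ} (Φ W : Matrix (Fin n) (Fin n) ℝ) (γ : ℝ) (N : ℕ)
    (hγ : γ ∈ Set.Ioo (0 : ℝ) 1)
    (hΦ : ∀ μ ∈ spectrum ℂ (Φ.map (algebraMap ℝ ℂ)), ‖μ‖ < 1)
    (X : ℕ → Matrix (Fin n) (Fin n) ℝ)
    (hX : ∀ i, X i = ∑ j ∈ Finset.range i, Φ ^ j * W * (Φ ^ j)ᵀ) :
    Summable (fun i : ℕ => γ ^ (N + i) • X (N + i)) ∧
      (∑' i : ℕ, γ ^ (N + i) • X (N + i)) =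
        γ • (Φ * (∑' i : ℕ, γ ^ (N + i) • X (N + i)) * Φᵀ)
          + (γ ^ (N + 1) / (1 - γ)) • W + γ ^ N • X N := by
  have hγ' : |γ| < 1 := abs_lt.mpr ⟨by linarith [hγ.1], hγ.2⟩
  obtain ⟨C, hC⟩ := Φ.bddAbove_norm_pow_of_spectrum_lt_one hΦ
  have hsum : Summable fun i => γ ^ i • X i :=
    summable_geometric_smul_of_norm_le_mul hγ' fun i =>
      hX i ▸ Matrix.norm_sum_pow_mul_mul_transpose_le (fun j => hC ⟨j, rfl⟩) i
  have htail : Summable fun i => γ ^ (N + i) • X (N + i) := by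
    simpa only [add_comm N] using (summable_nat_add_iff N).mpr hsum
  refine ⟨htail, htail.hasSum.eq_lyapunov (fun i => ?_) hγ' N⟩
  rw [hX, hX, Matrix.sum_range_succ_pow_mul_mul_transpose]

/-- For strictly stable `Φ`, `γ ∈ (0,1)`, symmetric `W`, and
`X i = ∑_{j<i} Φ^j W (Φ^j)ᵀ`, the series `S = ∑_{i=N}^∞ γ^i X i` converges and satisfies
the Lyapunov equation `S = γ Φ S Φᵀ + (γ^{N+1}/(1-γ)) W + γ^N X N`. -/
theorem stmt2 {n : ℕ} (Φ W : Matrix (Fin n) (Fin n) ℝ) (γ : ℝ) (N : ℕ)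
    (hγ : γ ∈ Set.Ioo (0 : ℝ) 1) (hW : Wᵀ = W)
    (hΦ : ∀ μ ∈ spectrum ℂ (Φ.map (algebraMap ℝ ℂ)), ‖μ‖ < 1)
    (X : ℕ → Matrix (Fin n) (Fin n) ℝ)
    (hX : ∀ i, X i = ∑ j ∈ Finset.range i, Φ ^ j * W * (Φ ^ j)ᵀ) :
    Summable (fun i : ℕ => γ ^ (N + i) • X (N + i)) ∧
      (∑' i : ℕ, γ ^ (N + i) • X (N + i)) =
        γ • (Φ * (∑' i : ℕ, γ ^ (N + i) • X (N + i)) * Φᵀ)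
          + (γ ^ (N + 1) / (1 - γ)) • W + γ ^ N • X N :=
  stmt2_general Φ W γ N hγ hΦ X hX
end

section
/- Suppose nonnegative random variables ε_k adapted to a filtration satisfy γ E[ε_{k+1} | F_k] ≤ ε_k − g_k almost surely for all k, where γ ∈ (0,1) and g_k ≥ 0 is F_k-measurable. Then for every k, Σ_{i=0}^∞ γ^i E[g_{k+i} | F_k] ≤ ε_k almost surely. -/
/-!
Conditioning the drift inequality at time `k + i` on `ℱ k` (tower property) gives
`γ E_k[ε_{k+i+1}] ≤ E_k[ε_{k+i}] - E_k[g_{k+i}]`. Multiplying by `γ^i` and telescoping,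
`∑_{i<n} γ^i E_k[g_{k+i}] + γ^n E_k[ε_{k+n}] ≤ ε_k` for every `n`; the remainder is
nonnegative, so the partial sums of the nonnegative series are bounded by `ε_k`.
-/

open MeasureTheory Filter

theorem const_smul_condExp_le_condExp_sub_of_le {Ω : Type*} {m₁ m₂ m₀ : MeasurableSpace Ω}
    {μ : Measure Ω} (hm₁₂ : m₁ ≤ m₂) (hm₂ : m₂ ≤ m₀) [SigmaFinite (μ.trim hm₂)]
    {c : ℝ} {X Y Z : Ω → ℝ} (hY : Integrable Y μ) (hZ : Integrable Z μ)
    (h : c • μ[X|m₂] ≤ᵐ[μ] Y - Z) :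
    c • μ[X|m₁] ≤ᵐ[μ] μ[Y|m₁] - μ[Z|m₁] := by
  have hmono : μ[c • μ[X|m₂]|m₁] ≤ᵐ[μ] μ[Y - Z|m₁] :=
    condExp_mono (integrable_condExp.smul c) (hY.sub hZ) h
  have hlhs : μ[c • μ[X|m₂]|m₁] =ᵐ[μ] c • μ[X|m₁] :=
    (condExp_smul c _ m₁).trans ((condExp_condExp_of_le hm₁₂ hm₂).const_smul c)
  filter_upwards [hmono, hlhs, condExp_sub hY hZ m₁] with ω hω hl hr
  rwa [← hl, ← hr]

section DiscountedDrift

variable {Ω : Type*} {m0 : MeasurableSpace Ω} {μ : Measure Ω} {ℱ : Filtration ℕ m0}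
  [SigmaFiniteFiltration μ ℱ] {γ : ℝ} {ε g : ℕ → Ω → ℝ}

theorem sum_range_discounted_condExp_add_le (hγ : 0 ≤ γ) {k : ℕ}
    (hεk : StronglyMeasurable[ℱ k] (ε k))
    (hεint : ∀ j, Integrable (ε j) μ) (hgint : ∀ j, Integrable (g j) μ)
    (hdrift : ∀ j, ∀ᵐ ω ∂μ, γ * (μ[ε (j + 1)|ℱ j]) ω ≤ ε j ω - g j ω) (n : ℕ) :
    ∀ᵐ ω ∂μ, ∑ i ∈ Finset.range n, γ ^ i * (μ[g (k + i)|ℱ k]) ω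
      + γ ^ n * (μ[ε (k + n)|ℱ k]) ω ≤ ε k ω := by
  induction n with
  | zero => simp [condExp_of_stronglyMeasurable (ℱ.le k) hεk (hεint k)]
  | succ n ih =>
    have hstep : γ • μ[ε (k + n + 1)|ℱ k] ≤ᵐ[μ] μ[ε (k + n)|ℱ k] - μ[g (k + n)|ℱ k] :=
      const_smul_condExp_le_condExp_sub_of_le (ℱ.mono (Nat.le_add_right k n)) (ℱ.le (k + n))
        (hεint (k + n)) (hgint (k + n)) (hdrift (k + n))
    filter_upwards [ih, hstep] with ω ih hstep
    have hscaled := mul_le_mul_of_nonneg_left hstep (pow_nonneg hγ n)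
    simp only [Pi.smul_apply, Pi.sub_apply, smul_eq_mul] at hscaled
    rw [Finset.sum_range_succ, pow_succ, ← add_assoc k n 1]
    linarith

end DiscountedDrift

theorem stmt9_general {Ω : Type*} {m0 : MeasurableSpace Ω} (μ : Measure Ω)
    [IsProbabilityMeasure μ] (ℱ : Filtration ℕ m0)
    (γ : ℝ) (hγ : γ ∈ Set.Ioo (0 : ℝ) 1)
    (ε g : ℕ → Ω → ℝ)
    (hεpos : ∀ k ω, 0 ≤ ε k ω) (hgpos : ∀ k ω, 0 ≤ g k ω)
    (hεadp : Adapted ℱ ε)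
    (hεint : ∀ k, Integrable (ε k) μ) (hgint : ∀ k, Integrable (g k) μ)
    (hdrift : ∀ k, ∀ᵐ ω ∂μ, γ * (μ[ε (k + 1)|ℱ k]) ω ≤ ε k ω - g k ω) :
    ∀ k, ∀ᵐ ω ∂μ, (∑' i : ℕ, γ ^ i * (μ[g (k + i)|ℱ k]) ω) ≤ ε k ω := by
  intro k
  have hpartial := fun n ↦ sum_range_discounted_condExp_add_le hγ.1.le
    (hεadp k).stronglyMeasurable hεint hgint hdrift n
  have hg_nonneg (i : ℕ) : 0 ≤ᵐ[μ] μ[g (k + i)|ℱ k] :=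
    condExp_nonneg (Eventually.of_forall (hgpos (k + i)))
  have hε_nonneg (n : ℕ) : 0 ≤ᵐ[μ] μ[ε (k + n)|ℱ k] :=
    condExp_nonneg (Eventually.of_forall (hεpos (k + n)))
  filter_upwards [ae_all_iff.2 hpartial, ae_all_iff.2 hg_nonneg, ae_all_iff.2 hε_nonneg]
    with ω hpartial hg_nonneg hε_nonneg
  refine Real.tsum_le_of_sum_range_le
    (fun i ↦ mul_nonneg (pow_nonneg hγ.1.le i) (hg_nonneg i)) fun n ↦ ?_
  have := mul_nonneg (pow_nonneg hγ.1.le n) (hε_nonneg n)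
  linarith [hpartial n]

/-- Discounted drift condition implies a discounted sum bound: if nonnegative adapted
`ε_k`, `g_k` satisfy `γ E[ε_{k+1} | F_k] ≤ ε_k - g_k` a.s. with `γ ∈ (0,1)`, then for
every `k`, `∑_{i=0}^∞ γ^i E[g_{k+i} | F_k] ≤ ε_k` almost surely. -/
theorem stmt9 {Ω : Type*} {m0 : MeasurableSpace Ω} (μ : Measure Ω)
    [IsProbabilityMeasure μ] (ℱ : Filtration ℕ m0)
    (γ : ℝ) (hγ : γ ∈ Set.Ioo (0 : ℝ) 1)
    (ε g : ℕ → Ω → ℝ)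
    (hεpos : ∀ k ω, 0 ≤ ε k ω) (hgpos : ∀ k ω, 0 ≤ g k ω)
    (hεadp : Adapted ℱ ε) (hgadp : Adapted ℱ g)
    (hεint : ∀ k, Integrable (ε k) μ) (hgint : ∀ k, Integrable (g k) μ)
    (hdrift : ∀ k, ∀ᵐ ω ∂μ, γ * (μ[ε (k + 1)|ℱ k]) ω ≤ ε k ω - g k ω) :
    ∀ k, ∀ᵐ ω ∂μ, (∑' i : ℕ, γ ^ i * (μ[g (k + i)|ℱ k]) ω) ≤ ε k ω :=
  stmt9_general μ ℱ γ hγ ε g hεpos hgpos hεadp hεint hgint hdrift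
end

section
/- Under the hypotheses γ ∈ (0,1), ε_k ≥ 0, γ E[ε_{k+1} | F_k] ≤ ε_k − ‖C x_k‖²/t² a.s. for all k, and t > 0, the discounted sum of violation probabilities satisfies Σ_{k=0}^∞ γ^k P(‖C x_k‖ ≥ t) ≤ ε_0, where ε_0 is deterministic. -/
open Matrix MeasureTheory Filter

/-- Euclidean norm of a vector in `ℝ^m`. -/
noncomputable def euclNorm {m : ℕ} (v : Fin m → ℝ) : ℝ := Real.sqrt (∑ j, v j ^ 2)

/-- Closed-loop chance constraint satisfaction: if nonnegative adapted `ε_k` with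
deterministic `ε_0 = e₀` satisfy `γ E[ε_{k+1} | F_k] ≤ ε_k - ‖C x_k‖²/t²` a.s. for all
`k`, with `γ ∈ (0,1)` and `t > 0`, then
`∑_{k=0}^∞ γ^k P(‖C x_k‖ ≥ t) ≤ e₀`. -/
theorem stmt10 {n m : ℕ} {Ω : Type*} {m0 : MeasurableSpace Ω} (μ : Measure Ω)
    [IsProbabilityMeasure μ] (ℱ : Filtration ℕ m0)
    (γ t : ℝ) (hγ : γ ∈ Set.Ioo (0 : ℝ) 1) (ht : 0 < t)
    (C : Matrix (Fin m) (Fin n) ℝ)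
    (x : ℕ → Ω → Fin n → ℝ) (hxadp : Adapted ℱ x)
    (hxint : ∀ k, Integrable (fun ω => euclNorm (C.mulVec (x k ω)) ^ 2) μ)
    (ε : ℕ → Ω → ℝ) (hεpos : ∀ k ω, 0 ≤ ε k ω)
    (hεadp : Adapted ℱ ε) (hεint : ∀ k, Integrable (ε k) μ)
    (e₀ : ℝ) (hε0 : ∀ ω, ε 0 ω = e₀)
    (hdrift : ∀ k, ∀ᵐ ω ∂μ,
      γ * (μ[ε (k + 1)|ℱ k]) ω ≤ ε k ω - euclNorm (C.mulVec (x k ω)) ^ 2 / t ^ 2) :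
    (∑' k : ℕ, γ ^ k * (μ {ω | t ≤ euclNorm (C.mulVec (x k ω))}).toReal) ≤ e₀ := by
  obtain ⟨hγ0, hγ1⟩ := hγ
  set a : ℕ → ℝ := fun k => ∫ ω, ε k ω ∂μ with ha
  set b : ℕ → ℝ := fun k => ∫ ω, euclNorm (C.mulVec (x k ω)) ^ 2 ∂μ with hb
  have ha0 : a 0 = e₀ := by
    simp only [ha]
    rw [show (fun ω => ε 0 ω) = fun _ : Ω => e₀ from funext hε0]
    simp
  have hanneg : ∀ k, 0 ≤ a k := fun k => integral_nonneg (fun ω => hεpos k ω)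
  have hbnneg : ∀ k, 0 ≤ b k := fun k => integral_nonneg (fun ω => sq_nonneg _)
  -- integrated drift inequality
  have hdrift' : ∀ k, γ * a (k + 1) ≤ a k - b k / t ^ 2 := by
    intro k
    have h1 : ∫ ω, γ * (μ[ε (k + 1)|ℱ k]) ω ∂μ ≤
        ∫ ω, (ε k ω - euclNorm (C.mulVec (x k ω)) ^ 2 / t ^ 2) ∂μ := by
      refine integral_mono_ae ((integrable_condExp).const_mul γ)
        ((hεint k).sub ((hxint k).div_const _)) (hdrift k)
    rwa [integral_const_mul, integral_condExp (ℱ.le k), integral_sub (hεint k)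
      ((hxint k).div_const _), integral_div] at h1
  -- Markov
  have hmarkov : ∀ k, (μ {ω | t ≤ euclNorm (C.mulVec (x k ω))}).toReal ≤ b k / t ^ 2 := by
    intro k
    have hset : {ω | t ≤ euclNorm (C.mulVec (x k ω))} =
        {ω | t ^ 2 ≤ euclNorm (C.mulVec (x k ω)) ^ 2} := by
      ext ω
      simp only [Set.mem_setOf_eq]
      constructor
      · intro h; exact pow_le_pow_left₀ ht.le h 2
      · intro h
        have hv : 0 ≤ euclNorm (C.mulVec (x k ω)) := Real.sqrt_nonneg _
        nlinarith
    rw [hset]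
    have := mul_meas_ge_le_integral_of_nonneg
      (f := fun ω => euclNorm (C.mulVec (x k ω)) ^ 2)
      (Filter.Eventually.of_forall fun ω => sq_nonneg _) (hxint k) (t ^ 2)
    have ht2 : (0:ℝ) < t ^ 2 := by positivity
    calc (μ {ω | t ^ 2 ≤ euclNorm (C.mulVec (x k ω)) ^ 2}).toReal
        ≤ (∫ ω, euclNorm (C.mulVec (x k ω)) ^ 2 ∂μ) / t ^ 2 := by
          rw [le_div_iff₀ ht2, mul_comm]; exact this
      _ = b k / t ^ 2 := rfl
  -- partial sums telescope
  have hpartial : ∀ N, ∑ k ∈ Finset.range N,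
      γ ^ k * (μ {ω | t ≤ euclNorm (C.mulVec (x k ω))}).toReal ≤ e₀ := by
    intro N
    have key : ∑ k ∈ Finset.range N,
        γ ^ k * (μ {ω | t ≤ euclNorm (C.mulVec (x k ω))}).toReal ≤
        ∑ k ∈ Finset.range N, (γ ^ k * a k - γ ^ (k + 1) * a (k + 1)) := by
      refine Finset.sum_le_sum fun k _ => ?_
      have h1 : γ ^ k * (μ {ω | t ≤ euclNorm (C.mulVec (x k ω))}).toReal ≤
          γ ^ k * (b k / t ^ 2) := by
        exact mul_le_mul_of_nonneg_left (hmarkov k) (pow_nonneg hγ0.le k)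
      have h2 : b k / t ^ 2 ≤ a k - γ * a (k + 1) := by linarith [hdrift' k]
      calc γ ^ k * (μ {ω | t ≤ euclNorm (C.mulVec (x k ω))}).toReal
          ≤ γ ^ k * (b k / t ^ 2) := h1
        _ ≤ γ ^ k * (a k - γ * a (k + 1)) :=
            mul_le_mul_of_nonneg_left h2 (pow_nonneg hγ0.le k)
        _ = γ ^ k * a k - γ ^ (k + 1) * a (k + 1) := by ring
    rw [Finset.sum_range_sub' (fun k => γ ^ k * a k) N] at key
    have : γ ^ 0 * a 0 - γ ^ N * a N ≤ e₀ := by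
      have : 0 ≤ γ ^ N * a N := mul_nonneg (pow_nonneg hγ0.le N) (hanneg N)
      rw [pow_zero, one_mul, ha0]; linarith
    linarith
  exact Real.tsum_le_of_sum_range_le
    (fun k => mul_nonneg (pow_nonneg hγ0.le k) ENNReal.toReal_nonneg) hpartial
end
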